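/- arXiv:math-ph/0403049 — 2 statements merged into one kernel-verified Lean document; each statement's English description precedes it below -/
import Mathlib

section
/- The linear map A : 𝔄 → 𝔄 defined by A(X, X̄) = (X_{>0} − X_{<0} − X̄₀, X̄_{<0} − X̄_{>0} + X₀) (the skew-symmetric part of R with respect to the trace pairing) satisfies the modified Yang–Baxter equation: for all x, y ∈ 𝔄, [A(x), A(y)] − A([A(x), y] + [x, A(y)]) = −[x, y]. -/
noncomputable section

/-- Formal difference operators `X = ∑ₖ aₖ Λᵏ`, encoded by their coefficient functions:
`X k n` is the value `aₖ(n)` of the coefficient of `Λᵏ`. -/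
abbrev DOp : Type := ℤ → ℤ → ℂ

/-- Product of difference operators, determined by `Λᵏ a = (a ∘ (·+k)) Λᵏ`:
the coefficient of `Λᵐ` in `X*Y` at `n` is `∑_{k+l=m} aₖ(n) bₗ(n+k)`. -/
def dmul (X Y : DOp) : DOp := fun m n => ∑ᶠ k : ℤ, X k n * Y (m - k) (n + k)

/-- Commutator `[X,Y] = XY - YX`. -/
def dcomm (X Y : DOp) : DOp := dmul X Y - dmul Y X

/-- Truncation `X_{≥K}`. -/
def truncGe (K : ℤ) (X : DOp) : DOp := fun k n => if K ≤ k then X k n else 0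
/-- Truncation `X_{≤K}`. -/
def truncLe (K : ℤ) (X : DOp) : DOp := fun k n => if k ≤ K then X k n else 0
/-- Truncation `X_{>K}`. -/
def truncGt (K : ℤ) (X : DOp) : DOp := fun k n => if K < k then X k n else 0
/-- Truncation `X_{<K}`. -/
def truncLt (K : ℤ) (X : DOp) : DOp := fun k n => if k < K then X k n else 0

/-- `X₊ := X_{≥0}`. -/
def dpos (X : DOp) : DOp := truncGe 0 X

/-- `X₋ := X_{<0}`. -/
def dneg (X : DOp) : DOp := truncLt 0 X

/-- The shift operator `Λ`. -/
def dlam : DOp := fun k _ => if k = 1 then 1 else 0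

/-- The identity operator. -/
def done : DOp := fun k _ => if k = 0 then 1 else 0

/-- Powers of a difference operator. -/
def dpow (X : DOp) : ℕ → DOp
  | 0 => done
  | n + 1 => dmul (dpow X n) X

/-- The residue: coefficient of `Λ⁰`. -/
def dres (X : DOp) : ℤ → ℂ := X 0

/-- The trace: `tr X = ∑ₙ a₀(n)`. -/
def dtr (X : DOp) : ℂ := ∑ᶠ n : ℤ, X 0 n

/-- `A⁺`: coefficients vanish in all sufficiently high degrees. -/
def IsUpper (X : DOp) : Prop := ∃ K : ℤ, ∀ k : ℤ, K < k → X k = 0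

/-- `A⁻`: coefficients vanish in all sufficiently low degrees. -/
def IsLower (X : DOp) : Prop := ∃ K : ℤ, ∀ k : ℤ, k < K → X k = 0

/-- `A⁰`: only finitely many nonzero coefficient functions. -/
def IsBdd (X : DOp) : Prop := {k : ℤ | X k ≠ 0}.Finite

/-- All coefficient functions finitely supported (finite total support). -/
def FinSuppOp (X : DOp) : Prop := (Function.support fun pr : ℤ × ℤ => X pr.1 pr.2).Finite

/-- Membership in `𝔄 = A⁺ ⊕ A⁻`. -/
def InA (x : DOp × DOp) : Prop := IsUpper x.1 ∧ IsLower x.2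

/-- Componentwise commutator on `𝔄`. -/
def pcomm (x y : DOp × DOp) : DOp × DOp := (dcomm x.1 y.1, dcomm x.2 y.2)

/-- Trace pairing `⟨(X,X̄),(Y,Ȳ)⟩ = tr(XY) + tr(X̄Ȳ)` on `𝔄`. -/
def ip (x y : DOp × DOp) : ℂ := dtr (dmul x.1 y.1) + dtr (dmul x.2 y.2)

/-- The degree-zero part `X₀` of a difference operator, as a multiplication operator. -/
def zero0 (X : DOp) : DOp := fun k n => if k = 0 then X 0 n else 0

/-- The skew-symmetric part `A(X,X̄) = (X_{>0} − X_{<0} − X̄₀, X̄_{<0} − X̄_{>0} + X₀)`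
of the R-matrix. -/
def Amat (x : DOp × DOp) : DOp × DOp :=
  (truncGt 0 x.1 - truncLt 0 x.1 - zero0 x.2,
   truncLt 0 x.2 - truncGt 0 x.2 + zero0 x.1)

/-! ### Auxiliary lemmas -/

/-- Lower bound on the degrees appearing in an operator. -/
def LBd (p : ℤ) (X : DOp) : Prop := ∀ k n, k < p → X k n = 0

/-- Upper bound on the degrees appearing in an operator. -/
def UBd (p : ℤ) (X : DOp) : Prop := ∀ k n, p < k → X k n = 0

theorem LBd.mono {p q : ℤ} {X : DOp} (h : LBd p X) (hq : q ≤ p) : LBd q X :=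
  fun k n hk => h k n (lt_of_lt_of_le hk hq)

theorem UBd.mono {p q : ℤ} {X : DOp} (h : UBd p X) (hq : p ≤ q) : UBd q X :=
  fun k n hk => h k n (lt_of_le_of_lt hq hk)

theorem lb_dmul {p q : ℤ} {X Y : DOp} (hX : LBd p X) (hY : LBd q Y) :
    LBd (p + q) (dmul X Y) := by
  intro m n hm
  show (∑ᶠ k : ℤ, X k n * Y (m - k) (n + k)) = 0
  apply finsum_eq_zero_of_forall_eq_zero
  intro k
  by_cases hk : k < p
  · rw [hX k n hk, zero_mul]
  · rw [hY (m - k) (n + k) (by omega), mul_zero]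

theorem ub_dmul {p q : ℤ} {X Y : DOp} (hX : UBd p X) (hY : UBd q Y) :
    UBd (p + q) (dmul X Y) := by
  intro m n hm
  show (∑ᶠ k : ℤ, X k n * Y (m - k) (n + k)) = 0
  apply finsum_eq_zero_of_forall_eq_zero
  intro k
  by_cases hk : p < k
  · rw [hX k n hk, zero_mul]
  · rw [hY (m - k) (n + k) (by omega), mul_zero]

theorem lb_dcomm {p q : ℤ} {X Y : DOp} (hX : LBd p X) (hY : LBd q Y) :
    LBd (p + q) (dcomm X Y) := by
  intro m n hm
  show dmul X Y m n - dmul Y X m n = 0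
  rw [lb_dmul hX hY m n hm, lb_dmul hY hX m n (by omega), sub_zero]

theorem ub_dcomm {p q : ℤ} {X Y : DOp} (hX : UBd p X) (hY : UBd q Y) :
    UBd (p + q) (dcomm X Y) := by
  intro m n hm
  show dmul X Y m n - dmul Y X m n = 0
  rw [ub_dmul hX hY m n hm, ub_dmul hY hX m n (by omega), sub_zero]

theorem lb_truncGt (X : DOp) : LBd 1 (truncGt 0 X) := by
  intro k n hk; simp only [truncGt, if_neg (by omega : ¬ (0:ℤ) < k)]

theorem ub_truncLt (X : DOp) : UBd (-1) (truncLt 0 X) := by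
  intro k n hk; simp only [truncLt, if_neg (by omega : ¬ k < (0:ℤ))]

theorem lb_zero0 (X : DOp) : LBd 0 (zero0 X) := by
  intro k n hk; simp only [zero0, if_neg (by omega : ¬ k = 0)]

theorem ub_zero0 (X : DOp) : UBd 0 (zero0 X) := by
  intro k n hk; simp only [zero0, if_neg (by omega : ¬ k = 0)]

theorem decompD (X : DOp) : X = truncGt 0 X + zero0 X + truncLt 0 X := by
  funext k n
  simp only [Pi.add_apply, truncGt, truncLt, zero0]
  rcases lt_trichotomy k 0 with h | h | h
  · rw [if_neg (by omega), if_neg (by omega), if_pos h]; ring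
  · subst h; norm_num
  · rw [if_pos h, if_neg (by omega), if_neg (by omega)]; ring
theorem trunc_eps_pos {U : DOp} (h : LBd 1 U) : truncGt 0 U - truncLt 0 U = U := by
  funext k n
  simp only [Pi.sub_apply, truncGt, truncLt]
  rcases lt_trichotomy k 0 with h0 | h0 | h0
  · rw [if_neg (by omega), if_pos h0, h k n (by omega)]; ring
  · subst h0; rw [h 0 n (by omega)]; ring
  · rw [if_pos h0, if_neg (by omega)]; ring

theorem trunc_eps_neg {U : DOp} (h : UBd (-1) U) : truncGt 0 U - truncLt 0 U = -U := by
  funext k n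
  simp only [Pi.sub_apply, Pi.neg_apply, truncGt, truncLt]
  rcases lt_trichotomy k 0 with h0 | h0 | h0
  · rw [if_neg (by omega), if_pos h0]; ring
  · subst h0; rw [h 0 n (by omega)]; ring
  · rw [if_pos h0, if_neg (by omega), h k n (by omega)]; ring

theorem trunc_eps_pos' {U : DOp} (h : LBd 1 U) : truncLt 0 U - truncGt 0 U = -U := by
  rw [show truncLt 0 U - truncGt 0 U = -(truncGt 0 U - truncLt 0 U) by abel, trunc_eps_pos h]

theorem trunc_eps_neg' {U : DOp} (h : UBd (-1) U) : truncLt 0 U - truncGt 0 U = U := by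
  rw [show truncLt 0 U - truncGt 0 U = -(truncGt 0 U - truncLt 0 U) by abel, trunc_eps_neg h,
    neg_neg]

theorem trunc_eps_add (U V : DOp) :
    truncGt 0 (U + V) - truncLt 0 (U + V) =
      (truncGt 0 U - truncLt 0 U) + (truncGt 0 V - truncLt 0 V) := by
  funext k n
  simp only [Pi.sub_apply, Pi.add_apply, truncGt, truncLt]
  split_ifs <;> ring

theorem trunc_eps_sub (U V : DOp) :
    truncGt 0 (U - V) - truncLt 0 (U - V) =
      (truncGt 0 U - truncLt 0 U) - (truncGt 0 V - truncLt 0 V) := by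
  funext k n
  simp only [Pi.sub_apply, truncGt, truncLt]
  split_ifs <;> ring

theorem trunc_eps_add' (U V : DOp) :
    truncLt 0 (U + V) - truncGt 0 (U + V) =
      (truncLt 0 U - truncGt 0 U) + (truncLt 0 V - truncGt 0 V) := by
  funext k n
  simp only [Pi.sub_apply, Pi.add_apply, truncGt, truncLt]
  split_ifs <;> ring

theorem trunc_eps_sub' (U V : DOp) :
    truncLt 0 (U - V) - truncGt 0 (U - V) =
      (truncLt 0 U - truncGt 0 U) - (truncLt 0 V - truncGt 0 V) := by
  funext k n
  simp only [Pi.sub_apply, truncGt, truncLt]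
  split_ifs <;> ring

theorem zero0_add (U V : DOp) : zero0 (U + V) = zero0 U + zero0 V := by
  funext k n
  simp only [Pi.add_apply, zero0]
  split_ifs <;> ring

theorem zero0_sub (U V : DOp) : zero0 (U - V) = zero0 U - zero0 V := by
  funext k n
  simp only [Pi.sub_apply, zero0]
  split_ifs <;> ring

theorem zero0_of_lb {U : DOp} (h : LBd 1 U) : zero0 U = 0 := by
  funext k n
  simp only [zero0, Pi.zero_apply]
  split_ifs with h0
  · exact h 0 n one_pos
  · rfl

theorem zero0_of_ub {U : DOp} (h : UBd (-1) U) : zero0 U = 0 := by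
  funext k n
  simp only [zero0, Pi.zero_apply]
  split_ifs with h0
  · exact h 0 n (by omega)
  · rfl

theorem dcomm_zer {U V : DOp} (hU0 : LBd 0 U) (hU1 : UBd 0 U) (hV0 : LBd 0 V)
    (hV1 : UBd 0 V) : dcomm U V = 0 := by
  funext m n
  have h1 : dmul U V m n = U 0 n * V m n := by
    show (∑ᶠ k : ℤ, U k n * V (m - k) (n + k)) = _
    rw [finsum_eq_single _ (0 : ℤ) fun k hk => by
      rcases lt_or_gt_of_ne hk with h | h
      · rw [hU0 k n h, zero_mul]
      · rw [hU1 k n h, zero_mul]]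
    norm_num
  have h2 : dmul V U m n = V 0 n * U m n := by
    show (∑ᶠ k : ℤ, V k n * U (m - k) (n + k)) = _
    rw [finsum_eq_single _ (0 : ℤ) fun k hk => by
      rcases lt_or_gt_of_ne hk with h | h
      · rw [hV0 k n h, zero_mul]
      · rw [hV1 k n h, zero_mul]]
    norm_num
  show dmul U V m n - dmul V U m n = 0
  rw [h1, h2]
  rcases lt_trichotomy m 0 with h | h | h
  · rw [hU0 m n h, hV0 m n h]; ring
  · subst h; ring
  · rw [hU1 m n h, hV1 m n h]; ring
theorem upper_fin {X Y : DOp} (hX : IsUpper X) (hY : IsUpper Y) (m n : ℤ) :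
    (Function.support fun k => X k n * Y (m - k) (n + k)).Finite := by
  obtain ⟨K, hK⟩ := hX
  obtain ⟨L, hL⟩ := hY
  apply Set.Finite.subset (Set.finite_Icc (m - L) K)
  intro k hk
  simp only [Function.mem_support] at hk
  refine Set.mem_Icc.mpr ⟨?_, ?_⟩
  · by_contra h
    exact hk (by rw [congrFun (hL (m - k) (by omega)) (n + k)]; simp)
  · by_contra h
    exact hk (by rw [congrFun (hK k (by omega)) n]; simp)

theorem lower_fin {X Y : DOp} (hX : IsLower X) (hY : IsLower Y) (m n : ℤ) :
    (Function.support fun k => X k n * Y (m - k) (n + k)).Finite := by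
  obtain ⟨K, hK⟩ := hX
  obtain ⟨L, hL⟩ := hY
  apply Set.Finite.subset (Set.finite_Icc K (m - L))
  intro k hk
  simp only [Function.mem_support] at hk
  refine Set.mem_Icc.mpr ⟨?_, ?_⟩
  · by_contra h
    exact hk (by rw [congrFun (hK k (by omega)) n]; simp)
  · by_contra h
    exact hk (by rw [congrFun (hL (m - k) (by omega)) (n + k)]; simp)

theorem IsUpper.add {X Y : DOp} (hX : IsUpper X) (hY : IsUpper Y) : IsUpper (X + Y) := by
  obtain ⟨K, hK⟩ := hX
  obtain ⟨L, hL⟩ := hY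
  refine ⟨max K L, fun k hk => ?_⟩
  funext n
  have h1 := congrFun (hK k (lt_of_le_of_lt (le_max_left K L) hk)) n
  have h2 := congrFun (hL k (lt_of_le_of_lt (le_max_right K L) hk)) n
  simp only [Pi.add_apply, Pi.zero_apply] at *
  rw [h1, h2, add_zero]

theorem IsUpper.neg {X : DOp} (hX : IsUpper X) : IsUpper (-X) := by
  obtain ⟨K, hK⟩ := hX
  refine ⟨K, fun k hk => ?_⟩
  funext n
  have h1 := congrFun (hK k hk) n
  simp only [Pi.neg_apply, Pi.zero_apply] at *
  rw [h1, neg_zero]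

theorem IsLower.add {X Y : DOp} (hX : IsLower X) (hY : IsLower Y) : IsLower (X + Y) := by
  obtain ⟨K, hK⟩ := hX
  obtain ⟨L, hL⟩ := hY
  refine ⟨min K L, fun k hk => ?_⟩
  funext n
  have h1 := congrFun (hK k (lt_of_lt_of_le hk (min_le_left K L))) n
  have h2 := congrFun (hL k (lt_of_lt_of_le hk (min_le_right K L))) n
  simp only [Pi.add_apply, Pi.zero_apply] at *
  rw [h1, h2, add_zero]

theorem IsLower.neg {X : DOp} (hX : IsLower X) : IsLower (-X) := by
  obtain ⟨K, hK⟩ := hX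
  refine ⟨K, fun k hk => ?_⟩
  funext n
  have h1 := congrFun (hK k hk) n
  simp only [Pi.neg_apply, Pi.zero_apply] at *
  rw [h1, neg_zero]

theorem upper_of_ub {X : DOp} (h : UBd 0 X) : IsUpper X :=
  ⟨0, fun k hk => funext fun n => h k n hk⟩

theorem lower_of_lb {X : DOp} (h : LBd 0 X) : IsLower X :=
  ⟨0, fun k hk => funext fun n => h k n hk⟩

theorem isUpper_truncGt {X : DOp} (hX : IsUpper X) : IsUpper (truncGt 0 X) := by
  obtain ⟨K, hK⟩ := hX
  refine ⟨K, fun k hk => ?_⟩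
  funext n
  have h1 := congrFun (hK k hk) n
  simp only [truncGt, Pi.zero_apply] at *
  split_ifs <;> simp [h1]

theorem isLower_truncLt {X : DOp} (hX : IsLower X) : IsLower (truncLt 0 X) := by
  obtain ⟨K, hK⟩ := hX
  refine ⟨K, fun k hk => ?_⟩
  funext n
  have h1 := congrFun (hK k hk) n
  simp only [truncLt, Pi.zero_apply] at *
  split_ifs <;> simp [h1]

theorem dmul_add_left {X X' Y : DOp}
    (h : ∀ m n : ℤ, (Function.support fun k => X k n * Y (m - k) (n + k)).Finite)
    (h' : ∀ m n : ℤ, (Function.support fun k => X' k n * Y (m - k) (n + k)).Finite) :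
    dmul (X + X') Y = dmul X Y + dmul X' Y := by
  funext m n
  show (∑ᶠ k : ℤ, (X k n + X' k n) * Y (m - k) (n + k)) = _
  simp only [add_mul]
  exact finsum_add_distrib (h m n) (h' m n)

theorem dmul_add_right {X Y Y' : DOp}
    (h : ∀ m n : ℤ, (Function.support fun k => X k n * Y (m - k) (n + k)).Finite)
    (h' : ∀ m n : ℤ, (Function.support fun k => X k n * Y' (m - k) (n + k)).Finite) :
    dmul X (Y + Y') = dmul X Y + dmul X Y' := by
  funext m n
  show (∑ᶠ k : ℤ, X k n * (Y (m - k) (n + k) + Y' (m - k) (n + k))) = _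
  simp only [mul_add]
  exact finsum_add_distrib (h m n) (h' m n)

theorem dmul_neg_left (X Y : DOp) : dmul (-X) Y = -dmul X Y := by
  funext m n
  show (∑ᶠ k : ℤ, -X k n * Y (m - k) (n + k)) = -(∑ᶠ k : ℤ, X k n * Y (m - k) (n + k))
  simp only [neg_mul]
  exact finsum_neg_distrib _

theorem dmul_neg_right (X Y : DOp) : dmul X (-Y) = -dmul X Y := by
  funext m n
  show (∑ᶠ k : ℤ, X k n * -Y (m - k) (n + k)) = -(∑ᶠ k : ℤ, X k n * Y (m - k) (n + k))
  simp only [mul_neg]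
  exact finsum_neg_distrib _

theorem dcomm_neg_left (X Y : DOp) : dcomm (-X) Y = -dcomm X Y := by
  unfold dcomm
  rw [dmul_neg_left, dmul_neg_right]
  abel

theorem dcomm_neg_right (X Y : DOp) : dcomm X (-Y) = -dcomm X Y := by
  unfold dcomm
  rw [dmul_neg_left, dmul_neg_right]
  abel

theorem dcomm_expand3_of {P : DOp → Prop}
    (Pg : ∀ U V : DOp, P U → P V →
      ∀ m n : ℤ, (Function.support fun k => U k n * V (m - k) (n + k)).Finite)
    (Pa : ∀ U V : DOp, P U → P V → P (U + V))
    {p q r s t w : DOp} (hp : P p) (hq : P q) (hr : P r) (hs : P s) (ht : P t) (hw : P w) :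
    dcomm (p + q + r) (s + t + w) =
      dcomm p s + dcomm p t + dcomm p w + (dcomm q s + dcomm q t + dcomm q w) +
      (dcomm r s + dcomm r t + dcomm r w) := by
  have hl : ∀ U V W' : DOp, P U → P V → P W' →
      dcomm (U + V) W' = dcomm U W' + dcomm V W' := by
    intro U V W' hU hV hW'
    unfold dcomm
    rw [dmul_add_left (Pg U W' hU hW') (Pg V W' hV hW'),
      dmul_add_right (Pg W' U hW' hU) (Pg W' V hW' hV)]
    abel
  have hr' : ∀ U V W' : DOp, P U → P V → P W' →
      dcomm W' (U + V) = dcomm W' U + dcomm W' V := by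
    intro U V W' hU hV hW'
    unfold dcomm
    rw [dmul_add_right (Pg W' U hW' hU) (Pg W' V hW' hV),
      dmul_add_left (Pg U W' hU hW') (Pg V W' hV hW')]
    abel
  have hstw : P (s + t + w) := Pa _ _ (Pa _ _ hs ht) hw
  rw [hl (p + q) r _ (Pa _ _ hp hq) hr hstw, hl p q _ hp hq hstw,
    hr' (s + t) w p (Pa _ _ hs ht) hw hp, hr' s t p hs ht hp,
    hr' (s + t) w q (Pa _ _ hs ht) hw hq, hr' s t q hs ht hq,
    hr' (s + t) w r (Pa _ _ hs ht) hw hr, hr' s t r hs ht hr]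
/-- the skew-symmetric part `A` of the R-matrix satisfies the modified
Yang–Baxter equation on `𝔄`. -/
theorem Amat_modified_yang_baxter :
    ∀ x y : DOp × DOp, InA x → InA y →
      pcomm (Amat x) (Amat y) - Amat (pcomm (Amat x) y + pcomm x (Amat y))
        = -pcomm x y := by
  rintro ⟨X, Xb⟩ ⟨Y, Yb⟩ ⟨hX, hXb⟩ ⟨hY, hYb⟩
  simp only [Amat, pcomm, Prod.mk_add_mk, Prod.mk_sub_mk, Prod.neg_mk, Prod.mk.injEq]
  set a := truncGt 0 X with ha
  set b := zero0 X with hb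
  set c := truncLt 0 X with hc
  set ab := truncGt 0 Xb with hab
  set bb := zero0 Xb with hbb
  set cb := truncLt 0 Xb with hcb
  set d := truncGt 0 Y with hd
  set e := zero0 Y with he
  set f := truncLt 0 Y with hf
  set db := truncGt 0 Yb with hdb
  set eb := zero0 Yb with heb
  set fb := truncLt 0 Yb with hfb
  rw [decompD X, decompD Y, decompD Xb, decompD Yb, ← ha, ← hb, ← hc, ← hab, ← hbb,
    ← hcb, ← hd, ← he, ← hf, ← hdb, ← heb, ← hfb]
  -- upperness of the atoms appearing in the first components
  have Ua : IsUpper a := by rw [ha]; exact isUpper_truncGt hX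
  have Ud : IsUpper d := by rw [hd]; exact isUpper_truncGt hY
  have Ub : IsUpper b := by rw [hb]; exact upper_of_ub (ub_zero0 X)
  have Ue : IsUpper e := by rw [he]; exact upper_of_ub (ub_zero0 Y)
  have Ubb : IsUpper bb := by rw [hbb]; exact upper_of_ub (ub_zero0 Xb)
  have Ueb : IsUpper eb := by rw [heb]; exact upper_of_ub (ub_zero0 Yb)
  have Uc : IsUpper c := by rw [hc]; exact upper_of_ub ((ub_truncLt X).mono (by norm_num))
  have Uf : IsUpper f := by rw [hf]; exact upper_of_ub ((ub_truncLt Y).mono (by norm_num))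
  -- lowerness of the atoms appearing in the second components
  have Lcb : IsLower cb := by rw [hcb]; exact isLower_truncLt hXb
  have Lfb : IsLower fb := by rw [hfb]; exact isLower_truncLt hYb
  have Lab : IsLower ab := by rw [hab]; exact lower_of_lb ((lb_truncGt Xb).mono (by norm_num))
  have Ldb : IsLower db := by rw [hdb]; exact lower_of_lb ((lb_truncGt Yb).mono (by norm_num))
  have Lb : IsLower b := by rw [hb]; exact lower_of_lb (lb_zero0 X)
  have Le : IsLower e := by rw [he]; exact lower_of_lb (lb_zero0 Y)
  have Lbb : IsLower bb := by rw [hbb]; exact lower_of_lb (lb_zero0 Xb)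
  have Leb : IsLower eb := by rw [heb]; exact lower_of_lb (lb_zero0 Yb)
  -- degree bounds of atoms
  have la : LBd 1 a := by rw [ha]; exact lb_truncGt X
  have ld : LBd 1 d := by rw [hd]; exact lb_truncGt Y
  have lab : LBd 1 ab := by rw [hab]; exact lb_truncGt Xb
  have ldb : LBd 1 db := by rw [hdb]; exact lb_truncGt Yb
  have uc : UBd (-1) c := by rw [hc]; exact ub_truncLt X
  have uf : UBd (-1) f := by rw [hf]; exact ub_truncLt Y
  have ucb : UBd (-1) cb := by rw [hcb]; exact ub_truncLt Xb
  have ufb : UBd (-1) fb := by rw [hfb]; exact ub_truncLt Yb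
  have lb0b : LBd 0 b := by rw [hb]; exact lb_zero0 X
  have ub0b : UBd 0 b := by rw [hb]; exact ub_zero0 X
  have lb0e : LBd 0 e := by rw [he]; exact lb_zero0 Y
  have ub0e : UBd 0 e := by rw [he]; exact ub_zero0 Y
  have lb0bb : LBd 0 bb := by rw [hbb]; exact lb_zero0 Xb
  have ub0bb : UBd 0 bb := by rw [hbb]; exact ub_zero0 Xb
  have lb0eb : LBd 0 eb := by rw [heb]; exact lb_zero0 Yb
  have ub0eb : UBd 0 eb := by rw [heb]; exact ub_zero0 Yb
  -- expansion principles
  have EU : ∀ p q r s t w : DOp, IsUpper p → IsUpper q → IsUpper r → IsUpper s →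
      IsUpper t → IsUpper w →
      dcomm (p + q + r) (s + t + w) =
        dcomm p s + dcomm p t + dcomm p w + (dcomm q s + dcomm q t + dcomm q w) +
        (dcomm r s + dcomm r t + dcomm r w) :=
    fun p q r s t w hp hq hr hs ht hw =>
      dcomm_expand3_of (fun U V hU hV => upper_fin hU hV)
        (fun U V hU hV => IsUpper.add hU hV) hp hq hr hs ht hw
  have EL : ∀ p q r s t w : DOp, IsLower p → IsLower q → IsLower r → IsLower s →
      IsLower t → IsLower w →
      dcomm (p + q + r) (s + t + w) =
        dcomm p s + dcomm p t + dcomm p w + (dcomm q s + dcomm q t + dcomm q w) +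
        (dcomm r s + dcomm r t + dcomm r w) :=
    fun p q r s t w hp hq hr hs ht hw =>
      dcomm_expand3_of (fun U V hU hV => lower_fin hU hV)
        (fun U V hU hV => IsLower.add hU hV) hp hq hr hs ht hw
  -- vanishing zero-degree brackets
  have z1 : dcomm b e = 0 := dcomm_zer lb0b ub0b lb0e ub0e
  have z2 : dcomm b eb = 0 := dcomm_zer lb0b ub0b lb0eb ub0eb
  have z3 : dcomm bb e = 0 := dcomm_zer lb0bb ub0bb lb0e ub0e
  have z4 : dcomm bb eb = 0 := dcomm_zer lb0bb ub0bb lb0eb ub0eb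
  -- sum normal forms
  have hu : a - c - bb = a + (-c) + (-bb) := by abel
  have hv : d - f - eb = d + (-f) + (-eb) := by abel
  have hub : cb - ab + b = cb + (-ab) + b := by abel
  have hvb : fb - db + e = fb + (-db) + e := by abel
  -- the two inner brackets
  have hW : dcomm (a - c - bb) (d + e + f) + dcomm (a + b + c) (d - f - eb) =
      dcomm a d + dcomm a d + dcomm a e - dcomm a eb - dcomm c f - dcomm c f -
        dcomm c e - dcomm c eb + dcomm b d - dcomm b f - dcomm bb d - dcomm bb f := by
    rw [hu, hv, EU a (-c) (-bb) d e f Ua Uc.neg Ubb.neg Ud Ue Uf,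
      EU a b c d (-f) (-eb) Ua Ub Uc Ud Uf.neg Ueb.neg]
    simp only [dcomm_neg_left, dcomm_neg_right]
    rw [z2, z3]
    abel
  have hWb : dcomm (cb - ab + b) (db + eb + fb) + dcomm (ab + bb + cb) (fb - db + e) =
      dcomm cb fb + dcomm cb fb + dcomm cb eb + dcomm cb e - dcomm ab db - dcomm ab db -
        dcomm ab eb + dcomm ab e + dcomm b db + dcomm b fb + dcomm bb fb - dcomm bb db := by
    rw [hub, hvb, EL cb (-ab) b db eb fb Lcb Lab.neg Lb Ldb Leb Lfb,
      EL ab bb cb fb (-db) e Lab Lbb Lcb Lfb Ldb.neg Le]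
    simp only [dcomm_neg_left, dcomm_neg_right]
    rw [z2, z3]
    abel
  -- epsilon values on the atoms (upper side)
  have tad : truncGt 0 (dcomm a d) - truncLt 0 (dcomm a d) = dcomm a d :=
    trunc_eps_pos ((lb_dcomm la ld).mono (by norm_num))
  have tae : truncGt 0 (dcomm a e) - truncLt 0 (dcomm a e) = dcomm a e :=
    trunc_eps_pos ((lb_dcomm la lb0e).mono (by norm_num))
  have taeb : truncGt 0 (dcomm a eb) - truncLt 0 (dcomm a eb) = dcomm a eb :=
    trunc_eps_pos ((lb_dcomm la lb0eb).mono (by norm_num))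
  have tbd : truncGt 0 (dcomm b d) - truncLt 0 (dcomm b d) = dcomm b d :=
    trunc_eps_pos ((lb_dcomm lb0b ld).mono (by norm_num))
  have tbbd : truncGt 0 (dcomm bb d) - truncLt 0 (dcomm bb d) = dcomm bb d :=
    trunc_eps_pos ((lb_dcomm lb0bb ld).mono (by norm_num))
  have tcf : truncGt 0 (dcomm c f) - truncLt 0 (dcomm c f) = -dcomm c f :=
    trunc_eps_neg ((ub_dcomm uc uf).mono (by norm_num))
  have tce : truncGt 0 (dcomm c e) - truncLt 0 (dcomm c e) = -dcomm c e :=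
    trunc_eps_neg ((ub_dcomm uc ub0e).mono (by norm_num))
  have tceb : truncGt 0 (dcomm c eb) - truncLt 0 (dcomm c eb) = -dcomm c eb :=
    trunc_eps_neg ((ub_dcomm uc ub0eb).mono (by norm_num))
  have tbf : truncGt 0 (dcomm b f) - truncLt 0 (dcomm b f) = -dcomm b f :=
    trunc_eps_neg ((ub_dcomm ub0b uf).mono (by norm_num))
  have tbbf : truncGt 0 (dcomm bb f) - truncLt 0 (dcomm bb f) = -dcomm bb f :=
    trunc_eps_neg ((ub_dcomm ub0bb uf).mono (by norm_num))
  -- epsilon values on the atoms (lower side, reversed truncation order)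
  have tcbfb : truncLt 0 (dcomm cb fb) - truncGt 0 (dcomm cb fb) = dcomm cb fb :=
    trunc_eps_neg' ((ub_dcomm ucb ufb).mono (by norm_num))
  have tcbeb : truncLt 0 (dcomm cb eb) - truncGt 0 (dcomm cb eb) = dcomm cb eb :=
    trunc_eps_neg' ((ub_dcomm ucb ub0eb).mono (by norm_num))
  have tcbe : truncLt 0 (dcomm cb e) - truncGt 0 (dcomm cb e) = dcomm cb e :=
    trunc_eps_neg' ((ub_dcomm ucb ub0e).mono (by norm_num))
  have tbfb : truncLt 0 (dcomm b fb) - truncGt 0 (dcomm b fb) = dcomm b fb :=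
    trunc_eps_neg' ((ub_dcomm ub0b ufb).mono (by norm_num))
  have tbbfb : truncLt 0 (dcomm bb fb) - truncGt 0 (dcomm bb fb) = dcomm bb fb :=
    trunc_eps_neg' ((ub_dcomm ub0bb ufb).mono (by norm_num))
  have tabdb : truncLt 0 (dcomm ab db) - truncGt 0 (dcomm ab db) = -dcomm ab db :=
    trunc_eps_pos' ((lb_dcomm lab ldb).mono (by norm_num))
  have tabeb : truncLt 0 (dcomm ab eb) - truncGt 0 (dcomm ab eb) = -dcomm ab eb :=
    trunc_eps_pos' ((lb_dcomm lab lb0eb).mono (by norm_num))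
  have tabe : truncLt 0 (dcomm ab e) - truncGt 0 (dcomm ab e) = -dcomm ab e :=
    trunc_eps_pos' ((lb_dcomm lab lb0e).mono (by norm_num))
  have tbdb : truncLt 0 (dcomm b db) - truncGt 0 (dcomm b db) = -dcomm b db :=
    trunc_eps_pos' ((lb_dcomm lb0b ldb).mono (by norm_num))
  have tbbdb : truncLt 0 (dcomm bb db) - truncGt 0 (dcomm bb db) = -dcomm bb db :=
    trunc_eps_pos' ((lb_dcomm lb0bb ldb).mono (by norm_num))
  -- zero0 values on the atoms
  have z0ad : zero0 (dcomm a d) = 0 := zero0_of_lb ((lb_dcomm la ld).mono (by norm_num))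
  have z0ae : zero0 (dcomm a e) = 0 := zero0_of_lb ((lb_dcomm la lb0e).mono (by norm_num))
  have z0aeb : zero0 (dcomm a eb) = 0 := zero0_of_lb ((lb_dcomm la lb0eb).mono (by norm_num))
  have z0bd : zero0 (dcomm b d) = 0 := zero0_of_lb ((lb_dcomm lb0b ld).mono (by norm_num))
  have z0bbd : zero0 (dcomm bb d) = 0 := zero0_of_lb ((lb_dcomm lb0bb ld).mono (by norm_num))
  have z0cf : zero0 (dcomm c f) = 0 := zero0_of_ub ((ub_dcomm uc uf).mono (by norm_num))
  have z0ce : zero0 (dcomm c e) = 0 := zero0_of_ub ((ub_dcomm uc ub0e).mono (by norm_num))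
  have z0ceb : zero0 (dcomm c eb) = 0 := zero0_of_ub ((ub_dcomm uc ub0eb).mono (by norm_num))
  have z0bf : zero0 (dcomm b f) = 0 := zero0_of_ub ((ub_dcomm ub0b uf).mono (by norm_num))
  have z0bbf : zero0 (dcomm bb f) = 0 := zero0_of_ub ((ub_dcomm ub0bb uf).mono (by norm_num))
  have z0cbfb : zero0 (dcomm cb fb) = 0 := zero0_of_ub ((ub_dcomm ucb ufb).mono (by norm_num))
  have z0cbeb : zero0 (dcomm cb eb) = 0 :=
    zero0_of_ub ((ub_dcomm ucb ub0eb).mono (by norm_num))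
  have z0cbe : zero0 (dcomm cb e) = 0 := zero0_of_ub ((ub_dcomm ucb ub0e).mono (by norm_num))
  have z0bfb : zero0 (dcomm b fb) = 0 := zero0_of_ub ((ub_dcomm ub0b ufb).mono (by norm_num))
  have z0bbfb : zero0 (dcomm bb fb) = 0 :=
    zero0_of_ub ((ub_dcomm ub0bb ufb).mono (by norm_num))
  have z0abdb : zero0 (dcomm ab db) = 0 := zero0_of_lb ((lb_dcomm lab ldb).mono (by norm_num))
  have z0abeb : zero0 (dcomm ab eb) = 0 :=
    zero0_of_lb ((lb_dcomm lab lb0eb).mono (by norm_num))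
  have z0abe : zero0 (dcomm ab e) = 0 := zero0_of_lb ((lb_dcomm lab lb0e).mono (by norm_num))
  have z0bdb : zero0 (dcomm b db) = 0 := zero0_of_lb ((lb_dcomm lb0b ldb).mono (by norm_num))
  have z0bbdb : zero0 (dcomm bb db) = 0 :=
    zero0_of_lb ((lb_dcomm lb0bb ldb).mono (by norm_num))
  -- epsilon of the inner brackets
  have hWgt : truncGt 0 (dcomm (a - c - bb) (d + e + f) + dcomm (a + b + c) (d - f - eb)) -
      truncLt 0 (dcomm (a - c - bb) (d + e + f) + dcomm (a + b + c) (d - f - eb)) =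
      dcomm a d + dcomm a d + dcomm a e - dcomm a eb + dcomm c f + dcomm c f + dcomm c e +
        dcomm c eb + dcomm b d + dcomm b f - dcomm bb d + dcomm bb f := by
    rw [hW]
    simp only [trunc_eps_add, trunc_eps_sub]
    rw [tad, tae, taeb, tcf, tce, tceb, tbd, tbf, tbbd, tbbf]
    abel
  have hWbgt : truncLt 0 (dcomm (cb - ab + b) (db + eb + fb) +
        dcomm (ab + bb + cb) (fb - db + e)) -
      truncGt 0 (dcomm (cb - ab + b) (db + eb + fb) + dcomm (ab + bb + cb) (fb - db + e)) =
      dcomm cb fb + dcomm cb fb + dcomm cb eb + dcomm cb e + dcomm ab db + dcomm ab db +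
        dcomm ab eb - dcomm ab e - dcomm b db + dcomm b fb + dcomm bb fb + dcomm bb db := by
    rw [hWb]
    simp only [trunc_eps_add', trunc_eps_sub']
    rw [tcbfb, tcbeb, tcbe, tabdb, tabeb, tabe, tbdb, tbfb, tbbfb, tbbdb]
    abel
  -- zero0 of the inner brackets
  have hzW : zero0 (dcomm (a - c - bb) (d + e + f) + dcomm (a + b + c) (d - f - eb)) = 0 := by
    rw [hW]
    simp only [zero0_add, zero0_sub, z0ad, z0ae, z0aeb, z0cf, z0ce, z0ceb, z0bd, z0bf,
      z0bbd, z0bbf]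
    simp
  have hzWb : zero0 (dcomm (cb - ab + b) (db + eb + fb) +
      dcomm (ab + bb + cb) (fb - db + e)) = 0 := by
    rw [hWb]
    simp only [zero0_add, zero0_sub, z0cbfb, z0cbeb, z0cbe, z0abdb, z0abeb, z0abe, z0bdb,
      z0bfb, z0bbfb, z0bbdb]
    simp
  -- the outer brackets
  have huv : dcomm (a - c - bb) (d - f - eb) =
      dcomm a d - dcomm a f - dcomm a eb - dcomm c d + dcomm c f + dcomm c eb -
        dcomm bb d + dcomm bb f := by
    rw [hu, hv, EU a (-c) (-bb) d (-f) (-eb) Ua Uc.neg Ubb.neg Ud Uf.neg Ueb.neg]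
    simp only [dcomm_neg_left, dcomm_neg_right, neg_neg]
    rw [z4]
    abel
  have hubvb : dcomm (cb - ab + b) (fb - db + e) =
      dcomm cb fb - dcomm cb db + dcomm cb e - dcomm ab fb + dcomm ab db - dcomm ab e +
        dcomm b fb - dcomm b db := by
    rw [hub, hvb, EL cb (-ab) b fb (-db) e Lcb Lab.neg Lb Lfb Ldb.neg Le]
    simp only [dcomm_neg_left, dcomm_neg_right, neg_neg]
    rw [z1]
    abel
  have hXY : dcomm (a + b + c) (d + e + f) =
      dcomm a d + dcomm a e + dcomm a f + dcomm b d + dcomm b f + dcomm c d + dcomm c e +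
        dcomm c f := by
    rw [EU a b c d e f Ua Ub Uc Ud Ue Uf, z1]
    abel
  have hXbYb : dcomm (ab + bb + cb) (db + eb + fb) =
      dcomm ab db + dcomm ab eb + dcomm ab fb + dcomm bb db + dcomm bb fb + dcomm cb db +
        dcomm cb eb + dcomm cb fb := by
    rw [EL ab bb cb db eb fb Lab Lbb Lcb Ldb Leb Lfb, z4]
    abel
  constructor
  · rw [huv, hWgt, hzWb, hXY]
    abel
  · rw [hubvb, hWbgt, hzW, hXbYb]
    abel
end
end

section
/- For every t ∈ ℂ, every (L, L̄) ∈ 𝔄 and every (X, X̄) ∈ 𝔄 (writing L − t for L minus t times the identity operator): P₁(L−t, L̄−t)(X,X̄) = P₁(L, L̄)(X,X̄); P₂(L−t, L̄−t)(X,X̄) = P₂(L, L̄)(X,X̄) − t·P₁(L, L̄)(X,X̄); and P₃(L−t, L̄−t)(X,X̄) = P₃(L, L̄)(X,X̄) − 2t·P₂(L, L̄)(X,X̄) + t²·P₁(L, L̄)(X,X̄). -/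
noncomputable section

/-- The first Poisson tensor `P₁` on `𝔄`, at the point `Lp = (L, L̄)`,
evaluated on the covector `x = (X, X̄)`. -/
def P1T (Lp x : DOp × DOp) : DOp × DOp :=
  (dcomm Lp.1 (dneg x.1 - dneg x.2)
      - truncLe 0 (dcomm Lp.1 x.1 + dcomm Lp.2 x.2),
   dcomm Lp.2 (dpos x.2 - dpos x.1)
      - truncGt 0 (dcomm Lp.1 x.1 + dcomm Lp.2 x.2))

/-- The second Poisson tensor `P₂` on `𝔄`. -/
def P2T (Lp x : DOp × DOp) : DOp × DOp :=
  ((1 / 2 : ℂ) •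
      (dcomm Lp.1 (dneg (dmul Lp.1 x.1 + dmul x.1 Lp.1)
            - dneg (dmul Lp.2 x.2 + dmul x.2 Lp.2))
        - dmul Lp.1 (truncLe 0 (dcomm Lp.1 x.1 + dcomm Lp.2 x.2))
        - dmul (truncLe 0 (dcomm Lp.1 x.1 + dcomm Lp.2 x.2)) Lp.1),
   (1 / 2 : ℂ) •
      (dcomm Lp.2 (dpos (dmul Lp.2 x.2 + dmul x.2 Lp.2)
            - dpos (dmul Lp.1 x.1 + dmul x.1 Lp.1))
        - dmul Lp.2 (truncGt 0 (dcomm Lp.1 x.1 + dcomm Lp.2 x.2))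
        - dmul (truncGt 0 (dcomm Lp.1 x.1 + dcomm Lp.2 x.2)) Lp.2))

/-- The third Poisson tensor `P₃` on `𝔄`. -/
def P3T (Lp x : DOp × DOp) : DOp × DOp :=
  (dcomm Lp.1 (dneg (dmul (dmul Lp.1 x.1) Lp.1 - dmul (dmul Lp.2 x.2) Lp.2))
      - dmul (dmul Lp.1 (truncLe 0 (dcomm Lp.1 x.1 + dcomm Lp.2 x.2))) Lp.1,
   dcomm Lp.2 (dpos (dmul (dmul Lp.2 x.2) Lp.2 - dmul (dmul Lp.1 x.1) Lp.1))
      - dmul (dmul Lp.2 (truncGt 0 (dcomm Lp.1 x.1 + dcomm Lp.2 x.2))) Lp.2)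


/-! ### Auxiliary lemmas -/

/-- Finiteness of the supports appearing in `dmul`. -/
def MulFin (A B : DOp) : Prop :=
  ∀ m n : ℤ, (Function.support fun k => A k n * B (m - k) (n + k)).Finite

lemma mulFin_upper {A B : DOp} (hA : IsUpper A) (hB : IsUpper B) : MulFin A B := by
  obtain ⟨KA, hKA⟩ := hA
  obtain ⟨KB, hKB⟩ := hB
  intro m n
  apply Set.Finite.subset (Set.finite_Icc (m - KB) KA)
  intro k hk
  simp only [Function.mem_support] at hk
  simp only [Set.mem_Icc]
  constructor
  · by_contra h
    push_neg at h
    have : KB < m - k := by omega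
    exact hk (by rw [hKB _ this]; simp)
  · by_contra h
    push_neg at h
    exact hk (by rw [hKA _ h]; simp)

lemma mulFin_lower {A B : DOp} (hA : IsLower A) (hB : IsLower B) : MulFin A B := by
  obtain ⟨KA, hKA⟩ := hA
  obtain ⟨KB, hKB⟩ := hB
  intro m n
  apply Set.Finite.subset (Set.finite_Icc KA (m - KB))
  intro k hk
  simp only [Function.mem_support] at hk
  simp only [Set.mem_Icc]
  constructor
  · by_contra h
    push_neg at h
    exact hk (by rw [hKA _ h]; simp)
  · by_contra h
    push_neg at h
    have : m - k < KB := by omega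
    exact hk (by rw [hKB _ this]; simp)

lemma isUpper_add {A B : DOp} (hA : IsUpper A) (hB : IsUpper B) : IsUpper (A + B) := by
  obtain ⟨KA, hKA⟩ := hA; obtain ⟨KB, hKB⟩ := hB
  exact ⟨max KA KB, fun k hk => by
    have h1 := hKA k (by omega); have h2 := hKB k (by omega)
    show A k + B k = 0
    rw [h1, h2]; simp⟩

lemma isUpper_sub {A B : DOp} (hA : IsUpper A) (hB : IsUpper B) : IsUpper (A - B) := by
  obtain ⟨KA, hKA⟩ := hA; obtain ⟨KB, hKB⟩ := hB
  exact ⟨max KA KB, fun k hk => by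
    have h1 := hKA k (by omega); have h2 := hKB k (by omega)
    show A k - B k = 0
    rw [h1, h2]; simp⟩

lemma isUpper_smul {A : DOp} (s : ℂ) (hA : IsUpper A) : IsUpper (s • A) := by
  obtain ⟨KA, hKA⟩ := hA
  exact ⟨KA, fun k hk => by show s • A k = 0; rw [hKA k hk]; simp⟩

lemma isUpper_done : IsUpper done :=
  ⟨0, fun k hk => by funext n; simp [done]; omega⟩

lemma isUpper_truncLe (K : ℤ) (A : DOp) : IsUpper (truncLe K A) :=
  ⟨K, fun k hk => by funext n; simp [truncLe]; omega⟩

lemma isUpper_truncLt (K : ℤ) (A : DOp) : IsUpper (truncLt K A) :=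
  ⟨K, fun k hk => by funext n; simp [truncLt]; omega⟩

lemma isUpper_dneg (A : DOp) : IsUpper (dneg A) := isUpper_truncLt 0 A

lemma isUpper_dmul {A B : DOp} (hA : IsUpper A) (hB : IsUpper B) : IsUpper (dmul A B) := by
  obtain ⟨KA, hKA⟩ := hA; obtain ⟨KB, hKB⟩ := hB
  refine ⟨KA + KB, fun m hm => ?_⟩
  funext n
  show (∑ᶠ k : ℤ, A k n * B (m - k) (n + k)) = 0
  apply finsum_eq_zero_of_forall_eq_zero
  intro k
  rcases le_or_gt k KA with h | h
  · rw [hKB (m - k) (by omega)]; simp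
  · rw [hKA k h]; simp

lemma isLower_add {A B : DOp} (hA : IsLower A) (hB : IsLower B) : IsLower (A + B) := by
  obtain ⟨KA, hKA⟩ := hA; obtain ⟨KB, hKB⟩ := hB
  exact ⟨min KA KB, fun k hk => by
    have h1 := hKA k (by omega); have h2 := hKB k (by omega)
    show A k + B k = 0
    rw [h1, h2]; simp⟩

lemma isLower_sub {A B : DOp} (hA : IsLower A) (hB : IsLower B) : IsLower (A - B) := by
  obtain ⟨KA, hKA⟩ := hA; obtain ⟨KB, hKB⟩ := hB
  exact ⟨min KA KB, fun k hk => by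
    have h1 := hKA k (by omega); have h2 := hKB k (by omega)
    show A k - B k = 0
    rw [h1, h2]; simp⟩

lemma isLower_smul {A : DOp} (s : ℂ) (hA : IsLower A) : IsLower (s • A) := by
  obtain ⟨KA, hKA⟩ := hA
  exact ⟨KA, fun k hk => by show s • A k = 0; rw [hKA k hk]; simp⟩

lemma isLower_done : IsLower done :=
  ⟨0, fun k hk => by funext n; simp [done]; omega⟩

lemma isLower_truncGt (K : ℤ) (A : DOp) : IsLower (truncGt K A) :=
  ⟨K + 1, fun k hk => by funext n; simp [truncGt]; omega⟩

lemma isLower_truncGe (K : ℤ) (A : DOp) : IsLower (truncGe K A) :=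
  ⟨K, fun k hk => by funext n; simp [truncGe]; omega⟩

lemma isLower_dpos (A : DOp) : IsLower (dpos A) := isLower_truncGe 0 A

lemma isLower_dmul {A B : DOp} (hA : IsLower A) (hB : IsLower B) : IsLower (dmul A B) := by
  obtain ⟨KA, hKA⟩ := hA; obtain ⟨KB, hKB⟩ := hB
  refine ⟨KA + KB, fun m hm => ?_⟩
  funext n
  show (∑ᶠ k : ℤ, A k n * B (m - k) (n + k)) = 0
  apply finsum_eq_zero_of_forall_eq_zero
  intro k
  rcases le_or_gt KA k with h | h
  · rw [hKB (m - k) (by omega)]; simp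
  · rw [hKA k h]; simp

/-! ### Bilinearity of `dmul` under support-finiteness assumptions -/

lemma dmul_sub_right {A B C : DOp} (h1 : MulFin A B) (h2 : MulFin A C) :
    dmul A (B - C) = dmul A B - dmul A C := by
  funext m n
  show (∑ᶠ k : ℤ, A k n * (B - C) (m - k) (n + k))
      = (∑ᶠ k : ℤ, A k n * B (m - k) (n + k)) - ∑ᶠ k : ℤ, A k n * C (m - k) (n + k)
  rw [← finsum_sub_distrib (h1 m n) (h2 m n)]
  exact finsum_congr fun k => by simp only [Pi.sub_apply]; ring

lemma dmul_add_right_s14 {A B C : DOp} (h1 : MulFin A B) (h2 : MulFin A C) :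
    dmul A (B + C) = dmul A B + dmul A C := by
  funext m n
  show (∑ᶠ k : ℤ, A k n * (B + C) (m - k) (n + k))
      = (∑ᶠ k : ℤ, A k n * B (m - k) (n + k)) + ∑ᶠ k : ℤ, A k n * C (m - k) (n + k)
  rw [← finsum_add_distrib (h1 m n) (h2 m n)]
  exact finsum_congr fun k => by simp only [Pi.add_apply]; ring

lemma dmul_sub_left {A B C : DOp} (h1 : MulFin A C) (h2 : MulFin B C) :
    dmul (A - B) C = dmul A C - dmul B C := by
  funext m n
  show (∑ᶠ k : ℤ, (A - B) k n * C (m - k) (n + k))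
      = (∑ᶠ k : ℤ, A k n * C (m - k) (n + k)) - ∑ᶠ k : ℤ, B k n * C (m - k) (n + k)
  rw [← finsum_sub_distrib (h1 m n) (h2 m n)]
  exact finsum_congr fun k => by simp only [Pi.sub_apply]; ring

lemma dmul_add_left_s14 {A B C : DOp} (h1 : MulFin A C) (h2 : MulFin B C) :
    dmul (A + B) C = dmul A C + dmul B C := by
  funext m n
  show (∑ᶠ k : ℤ, (A + B) k n * C (m - k) (n + k))
      = (∑ᶠ k : ℤ, A k n * C (m - k) (n + k)) + ∑ᶠ k : ℤ, B k n * C (m - k) (n + k)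
  rw [← finsum_add_distrib (h1 m n) (h2 m n)]
  exact finsum_congr fun k => by simp only [Pi.add_apply]; ring

lemma dmul_smul_right (s : ℂ) (A B : DOp) : dmul A (s • B) = s • dmul A B := by
  funext m n
  show (∑ᶠ k : ℤ, A k n * (s • B) (m - k) (n + k)) = s • ∑ᶠ k : ℤ, A k n * B (m - k) (n + k)
  rw [smul_finsum]
  exact finsum_congr fun k => by
    simp only [Pi.smul_apply, smul_eq_mul]; ring

lemma dmul_smul_left (s : ℂ) (A B : DOp) : dmul (s • A) B = s • dmul A B := by
  funext m n
  show (∑ᶠ k : ℤ, (s • A) k n * B (m - k) (n + k)) = s • ∑ᶠ k : ℤ, A k n * B (m - k) (n + k)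
  rw [smul_finsum]
  exact finsum_congr fun k => by
    simp only [Pi.smul_apply, smul_eq_mul]; ring

lemma dmul_done (A : DOp) : dmul A done = A := by
  funext m n
  show (∑ᶠ k : ℤ, A k n * done (m - k) (n + k)) = A m n
  rw [finsum_eq_single _ m (fun k hk => by
    show A k n * (if m - k = 0 then 1 else 0) = 0
    rw [if_neg (by omega), mul_zero])]
  show A m n * (if m - m = 0 then 1 else 0) = A m n
  simp

lemma done_dmul (A : DOp) : dmul done A = A := by
  funext m n
  show (∑ᶠ k : ℤ, done k n * A (m - k) (n + k)) = A m n
  rw [finsum_eq_single _ 0 (fun k hk => by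
    show (if k = 0 then (1 : ℂ) else 0) * A (m - k) (n + k) = 0
    rw [if_neg hk, zero_mul])]
  show (if (0 : ℤ) = 0 then (1 : ℂ) else 0) * A (m - 0) (n + 0) = A m n
  simp

lemma mulFin_done_right (A : DOp) : MulFin A done := by
  intro m n
  apply Set.Finite.subset (Set.finite_singleton m)
  intro k hk
  simp only [Function.mem_support] at hk
  simp only [Set.mem_singleton_iff]
  by_contra h
  exact hk (by
    show A k n * (if m - k = 0 then 1 else 0) = 0
    rw [if_neg (by omega), mul_zero])

lemma mulFin_done_left (A : DOp) : MulFin done A := by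
  intro m n
  apply Set.Finite.subset (Set.finite_singleton 0)
  intro k hk
  simp only [Function.mem_support] at hk
  simp only [Set.mem_singleton_iff]
  by_contra h
  exact hk (by
    show (if k = 0 then (1 : ℂ) else 0) * A (m - k) (n + k) = 0
    rw [if_neg h, zero_mul])

lemma mulFin_smul_right (s : ℂ) {A B : DOp} (h : MulFin A B) : MulFin A (s • B) := by
  intro m n
  apply (h m n).subset
  intro k hk
  simp only [Function.mem_support, Pi.smul_apply, smul_eq_mul] at hk ⊢
  intro hz
  apply hk
  rcases mul_eq_zero.1 hz with h' | h' <;> simp [h']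

lemma mulFin_smul_left (s : ℂ) {A B : DOp} (h : MulFin A B) : MulFin (s • A) B := by
  intro m n
  apply (h m n).subset
  intro k hk
  simp only [Function.mem_support, Pi.smul_apply, smul_eq_mul] at hk ⊢
  intro hz
  apply hk
  rcases mul_eq_zero.1 hz with h' | h' <;> simp [h']

lemma dmul_shift_left (t : ℂ) {A B : DOp} (h : MulFin A B) :
    dmul (A - t • done) B = dmul A B - t • B := by
  rw [dmul_sub_left h (mulFin_smul_left t (mulFin_done_left B)), dmul_smul_left, done_dmul]

lemma dmul_shift_right (t : ℂ) {A B : DOp} (h : MulFin A B) :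
    dmul A (B - t • done) = dmul A B - t • A := by
  rw [dmul_sub_right h (mulFin_smul_right t (mulFin_done_right A)), dmul_smul_right, dmul_done]

lemma dcomm_shift (t : ℂ) {A B : DOp} (h1 : MulFin A B) (h2 : MulFin B A) :
    dcomm (A - t • done) B = dcomm A B := by
  unfold dcomm
  rw [dmul_shift_left t h1, dmul_shift_right t h2]
  abel

lemma dcomm_sub_right {A B C : DOp} (h1 : MulFin A B) (h2 : MulFin A C)
    (h3 : MulFin B A) (h4 : MulFin C A) :
    dcomm A (B - C) = dcomm A B - dcomm A C := by
  unfold dcomm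
  rw [dmul_sub_right h1 h2, dmul_sub_left h3 h4]
  abel

lemma dcomm_add_right {A B C : DOp} (h1 : MulFin A B) (h2 : MulFin A C)
    (h3 : MulFin B A) (h4 : MulFin C A) :
    dcomm A (B + C) = dcomm A B + dcomm A C := by
  unfold dcomm
  rw [dmul_add_right_s14 h1 h2, dmul_add_left_s14 h3 h4]
  abel

lemma dcomm_smul_right (s : ℂ) (A B : DOp) : dcomm A (s • B) = s • dcomm A B := by
  unfold dcomm
  rw [dmul_smul_right, dmul_smul_left]
  module

lemma P1T_mk (L Lb X Xb : DOp) :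
    P1T (L, Lb) (X, Xb)
      = (dcomm L (dneg X - dneg Xb) - truncLe 0 (dcomm L X + dcomm Lb Xb),
         dcomm Lb (dpos Xb - dpos X) - truncGt 0 (dcomm L X + dcomm Lb Xb)) := rfl

lemma P2T_mk (L Lb X Xb : DOp) :
    P2T (L, Lb) (X, Xb)
      = ((1 / 2 : ℂ) •
          (dcomm L (dneg (dmul L X + dmul X L) - dneg (dmul Lb Xb + dmul Xb Lb))
            - dmul L (truncLe 0 (dcomm L X + dcomm Lb Xb))
            - dmul (truncLe 0 (dcomm L X + dcomm Lb Xb)) L),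
         (1 / 2 : ℂ) •
          (dcomm Lb (dpos (dmul Lb Xb + dmul Xb Lb) - dpos (dmul L X + dmul X L))
            - dmul Lb (truncGt 0 (dcomm L X + dcomm Lb Xb))
            - dmul (truncGt 0 (dcomm L X + dcomm Lb Xb)) Lb)) := rfl

lemma P3T_mk (L Lb X Xb : DOp) :
    P3T (L, Lb) (X, Xb)
      = (dcomm L (dneg (dmul (dmul L X) L - dmul (dmul Lb Xb) Lb))
          - dmul (dmul L (truncLe 0 (dcomm L X + dcomm Lb Xb))) L,
         dcomm Lb (dpos (dmul (dmul Lb Xb) Lb - dmul (dmul L X) L))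
          - dmul (dmul Lb (truncGt 0 (dcomm L X + dcomm Lb Xb))) Lb) := rfl

/-- behaviour of the three Poisson tensors under the shift
`(L, L̄) ↦ (L − t, L̄ − t)`:
`P₁` is invariant, `P₂(L−t,L̄−t) = P₂ − tP₁`, and `P₃(L−t,L̄−t) = P₃ − 2tP₂ + t²P₁`. -/
theorem shift_of_poisson_tensors (t : ℂ) (L Lb X Xb : DOp)
    (hL : IsUpper L) (hLb : IsLower Lb) (hX : IsUpper X) (hXb : IsLower Xb) :
    P1T (L - t • done, Lb - t • done) (X, Xb) = P1T (L, Lb) (X, Xb)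
    ∧ P2T (L - t • done, Lb - t • done) (X, Xb)
        = P2T (L, Lb) (X, Xb) - t • P1T (L, Lb) (X, Xb)
    ∧ P3T (L - t • done, Lb - t • done) (X, Xb)
        = P3T (L, Lb) (X, Xb) - (2 * t) • P2T (L, Lb) (X, Xb)
          + (t ^ 2) • P1T (L, Lb) (X, Xb) := by
  have uT1 : IsUpper (truncLe 0 (dcomm L X + dcomm Lb Xb)) := isUpper_truncLe _ _
  have lT2 : IsLower (truncGt 0 (dcomm L X + dcomm Lb Xb)) := isLower_truncGt _ _
  have uV : IsUpper (dneg X - dneg Xb) := isUpper_sub (isUpper_dneg _) (isUpper_dneg _)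
  have lV : IsLower (dpos Xb - dpos X) := isLower_sub (isLower_dpos _) (isLower_dpos _)
  have uW : IsUpper (dneg (dmul L X + dmul X L) - dneg (dmul Lb Xb + dmul Xb Lb)) :=
    isUpper_sub (isUpper_dneg _) (isUpper_dneg _)
  have lW : IsLower (dpos (dmul Lb Xb + dmul Xb Lb) - dpos (dmul L X + dmul X L)) :=
    isLower_sub (isLower_dpos _) (isLower_dpos _)
  have h1 : dcomm (L - t • done) X = dcomm L X :=
    dcomm_shift t (mulFin_upper hL hX) (mulFin_upper hX hL)
  have h2 : dcomm (Lb - t • done) Xb = dcomm Lb Xb :=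
    dcomm_shift t (mulFin_lower hLb hXb) (mulFin_lower hXb hLb)
  have h3 : dcomm (L - t • done) (dneg X - dneg Xb) = dcomm L (dneg X - dneg Xb) :=
    dcomm_shift t (mulFin_upper hL uV) (mulFin_upper uV hL)
  have h4 : dcomm (Lb - t • done) (dpos Xb - dpos X) = dcomm Lb (dpos Xb - dpos X) :=
    dcomm_shift t (mulFin_lower hLb lV) (mulFin_lower lV hLb)
  have hLX : dmul (L - t • done) X = dmul L X - t • X :=
    dmul_shift_left t (mulFin_upper hL hX)
  have hXL : dmul X (L - t • done) = dmul X L - t • X :=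
    dmul_shift_right t (mulFin_upper hX hL)
  have hLbXb : dmul (Lb - t • done) Xb = dmul Lb Xb - t • Xb :=
    dmul_shift_left t (mulFin_lower hLb hXb)
  have hXbLb : dmul Xb (Lb - t • done) = dmul Xb Lb - t • Xb :=
    dmul_shift_right t (mulFin_lower hXb hLb)
  have hLT : dmul (L - t • done) (truncLe 0 (dcomm L X + dcomm Lb Xb))
      = dmul L (truncLe 0 (dcomm L X + dcomm Lb Xb))
        - t • truncLe 0 (dcomm L X + dcomm Lb Xb) :=
    dmul_shift_left t (mulFin_upper hL uT1)
  have hTL : dmul (truncLe 0 (dcomm L X + dcomm Lb Xb)) (L - t • done)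
      = dmul (truncLe 0 (dcomm L X + dcomm Lb Xb)) L
        - t • truncLe 0 (dcomm L X + dcomm Lb Xb) :=
    dmul_shift_right t (mulFin_upper uT1 hL)
  have hLbT : dmul (Lb - t • done) (truncGt 0 (dcomm L X + dcomm Lb Xb))
      = dmul Lb (truncGt 0 (dcomm L X + dcomm Lb Xb))
        - t • truncGt 0 (dcomm L X + dcomm Lb Xb) :=
    dmul_shift_left t (mulFin_lower hLb lT2)
  have hTLb : dmul (truncGt 0 (dcomm L X + dcomm Lb Xb)) (Lb - t • done)
      = dmul (truncGt 0 (dcomm L X + dcomm Lb Xb)) Lb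
        - t • truncGt 0 (dcomm L X + dcomm Lb Xb) :=
    dmul_shift_right t (mulFin_lower lT2 hLb)
  refine ⟨?_, ?_, ?_⟩
  · -- P1 invariance
    rw [P1T_mk, P1T_mk, h1, h2, h3, h4]
  · -- P2 shift
    have e1 : dmul L X - t • X + (dmul X L - t • X)
        = dmul L X + dmul X L - (2 * t) • X := by module
    have e1b : dmul Lb Xb - t • Xb + (dmul Xb Lb - t • Xb)
        = dmul Lb Xb + dmul Xb Lb - (2 * t) • Xb := by module
    have ed : dneg (dmul L X + dmul X L - (2 * t) • X)
          - dneg (dmul Lb Xb + dmul Xb Lb - (2 * t) • Xb)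
        = (dneg (dmul L X + dmul X L) - dneg (dmul Lb Xb + dmul Xb Lb))
          - (2 * t) • (dneg X - dneg Xb) := by
      funext k n
      simp only [dneg, truncLt, Pi.add_apply, Pi.sub_apply, Pi.smul_apply, smul_eq_mul]
      split_ifs <;> ring
    have ep : dpos (dmul Lb Xb + dmul Xb Lb - (2 * t) • Xb)
          - dpos (dmul L X + dmul X L - (2 * t) • X)
        = (dpos (dmul Lb Xb + dmul Xb Lb) - dpos (dmul L X + dmul X L))
          - (2 * t) • (dpos Xb - dpos X) := by
      funext k n
      simp only [dpos, truncGe, Pi.add_apply, Pi.sub_apply, Pi.smul_apply, smul_eq_mul]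
      split_ifs <;> ring
    have uSV : IsUpper ((2 * t) • (dneg X - dneg Xb)) := isUpper_smul _ uV
    have lSV : IsLower ((2 * t) • (dpos Xb - dpos X)) := isLower_smul _ lV
    have e4 : dcomm (L - t • done)
          ((dneg (dmul L X + dmul X L) - dneg (dmul Lb Xb + dmul Xb Lb))
            - (2 * t) • (dneg X - dneg Xb))
        = dcomm L (dneg (dmul L X + dmul X L) - dneg (dmul Lb Xb + dmul Xb Lb))
          - (2 * t) • dcomm L (dneg X - dneg Xb) := by
      rw [dcomm_shift t (mulFin_upper hL (isUpper_sub uW uSV))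
            (mulFin_upper (isUpper_sub uW uSV) hL),
          dcomm_sub_right (mulFin_upper hL uW) (mulFin_upper hL uSV)
            (mulFin_upper uW hL) (mulFin_upper uSV hL),
          dcomm_smul_right]
    have e4b : dcomm (Lb - t • done)
          ((dpos (dmul Lb Xb + dmul Xb Lb) - dpos (dmul L X + dmul X L))
            - (2 * t) • (dpos Xb - dpos X))
        = dcomm Lb (dpos (dmul Lb Xb + dmul Xb Lb) - dpos (dmul L X + dmul X L))
          - (2 * t) • dcomm Lb (dpos Xb - dpos X) := by
      rw [dcomm_shift t (mulFin_lower hLb (isLower_sub lW lSV))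
            (mulFin_lower (isLower_sub lW lSV) hLb),
          dcomm_sub_right (mulFin_lower hLb lW) (mulFin_lower hLb lSV)
            (mulFin_lower lW hLb) (mulFin_lower lSV hLb),
          dcomm_smul_right]
    rw [P2T_mk, P2T_mk, P1T_mk]
    simp only [Prod.mk_sub_mk, Prod.smul_mk, Prod.mk.injEq]
    constructor
    · rw [h1, h2, hLX, hXL, hLbXb, hXbLb, e1, e1b, ed, e4, hLT, hTL]
      module
    · rw [h1, h2, hLX, hXL, hLbXb, hXbLb, e1, e1b, ep, e4b, hLbT, hTLb]
      module
  · -- P3 shift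
    have g1 : dmul (dmul L X - t • X) (L - t • done)
        = dmul (dmul L X) L - t • dmul L X - t • dmul X L + (t ^ 2) • X := by
      rw [dmul_shift_right t
            (mulFin_upper (isUpper_sub (isUpper_dmul hL hX) (isUpper_smul t hX)) hL),
          dmul_sub_left (mulFin_upper (isUpper_dmul hL hX) hL)
            (mulFin_upper (isUpper_smul t hX) hL),
          dmul_smul_left]
      module
    have g2 : dmul (dmul Lb Xb - t • Xb) (Lb - t • done)
        = dmul (dmul Lb Xb) Lb - t • dmul Lb Xb - t • dmul Xb Lb + (t ^ 2) • Xb := by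
      rw [dmul_shift_right t
            (mulFin_lower (isLower_sub (isLower_dmul hLb hXb) (isLower_smul t hXb)) hLb),
          dmul_sub_left (mulFin_lower (isLower_dmul hLb hXb) hLb)
            (mulFin_lower (isLower_smul t hXb) hLb),
          dmul_smul_left]
      module
    have g3 : dmul (dmul L (truncLe 0 (dcomm L X + dcomm Lb Xb))
            - t • truncLe 0 (dcomm L X + dcomm Lb Xb)) (L - t • done)
        = dmul (dmul L (truncLe 0 (dcomm L X + dcomm Lb Xb))) L
          - t • dmul L (truncLe 0 (dcomm L X + dcomm Lb Xb))
          - t • dmul (truncLe 0 (dcomm L X + dcomm Lb Xb)) L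
          + (t ^ 2) • truncLe 0 (dcomm L X + dcomm Lb Xb) := by
      rw [dmul_shift_right t
            (mulFin_upper (isUpper_sub (isUpper_dmul hL uT1) (isUpper_smul t uT1)) hL),
          dmul_sub_left (mulFin_upper (isUpper_dmul hL uT1) hL)
            (mulFin_upper (isUpper_smul t uT1) hL),
          dmul_smul_left]
      module
    have g3b : dmul (dmul Lb (truncGt 0 (dcomm L X + dcomm Lb Xb))
            - t • truncGt 0 (dcomm L X + dcomm Lb Xb)) (Lb - t • done)
        = dmul (dmul Lb (truncGt 0 (dcomm L X + dcomm Lb Xb))) Lb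
          - t • dmul Lb (truncGt 0 (dcomm L X + dcomm Lb Xb))
          - t • dmul (truncGt 0 (dcomm L X + dcomm Lb Xb)) Lb
          + (t ^ 2) • truncGt 0 (dcomm L X + dcomm Lb Xb) := by
      rw [dmul_shift_right t
            (mulFin_lower (isLower_sub (isLower_dmul hLb lT2) (isLower_smul t lT2)) hLb),
          dmul_sub_left (mulFin_lower (isLower_dmul hLb lT2) hLb)
            (mulFin_lower (isLower_smul t lT2) hLb),
          dmul_smul_left]
      module
    have e6 : dneg (dmul (dmul L X) L - t • dmul L X - t • dmul X L + (t ^ 2) • X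
            - (dmul (dmul Lb Xb) Lb - t • dmul Lb Xb - t • dmul Xb Lb + (t ^ 2) • Xb))
        = dneg (dmul (dmul L X) L - dmul (dmul Lb Xb) Lb)
          - t • (dneg (dmul L X + dmul X L) - dneg (dmul Lb Xb + dmul Xb Lb))
          + (t ^ 2) • (dneg X - dneg Xb) := by
      funext k n
      simp only [dneg, truncLt, Pi.add_apply, Pi.sub_apply, Pi.smul_apply, smul_eq_mul]
      split_ifs <;> ring
    have e6b : dpos (dmul (dmul Lb Xb) Lb - t • dmul Lb Xb - t • dmul Xb Lb + (t ^ 2) • Xb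
            - (dmul (dmul L X) L - t • dmul L X - t • dmul X L + (t ^ 2) • X))
        = dpos (dmul (dmul Lb Xb) Lb - dmul (dmul L X) L)
          - t • (dpos (dmul Lb Xb + dmul Xb Lb) - dpos (dmul L X + dmul X L))
          + (t ^ 2) • (dpos Xb - dpos X) := by
      funext k n
      simp only [dpos, truncGe, Pi.add_apply, Pi.sub_apply, Pi.smul_apply, smul_eq_mul]
      split_ifs <;> ring
    have uN : IsUpper (dneg (dmul (dmul L X) L - dmul (dmul Lb Xb) Lb)) := isUpper_dneg _
    have lN : IsLower (dpos (dmul (dmul Lb Xb) Lb - dmul (dmul L X) L)) := isLower_dpos _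
    have u1 : IsUpper (t • (dneg (dmul L X + dmul X L) - dneg (dmul Lb Xb + dmul Xb Lb))) :=
      isUpper_smul _ uW
    have l1 : IsLower (t • (dpos (dmul Lb Xb + dmul Xb Lb) - dpos (dmul L X + dmul X L))) :=
      isLower_smul _ lW
    have u2 : IsUpper ((t ^ 2) • (dneg X - dneg Xb)) := isUpper_smul _ uV
    have l2 : IsLower ((t ^ 2) • (dpos Xb - dpos X)) := isLower_smul _ lV
    have e7 : dcomm (L - t • done)
          (dneg (dmul (dmul L X) L - dmul (dmul Lb Xb) Lb)
            - t • (dneg (dmul L X + dmul X L) - dneg (dmul Lb Xb + dmul Xb Lb))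
            + (t ^ 2) • (dneg X - dneg Xb))
        = dcomm L (dneg (dmul (dmul L X) L - dmul (dmul Lb Xb) Lb))
          - t • dcomm L (dneg (dmul L X + dmul X L) - dneg (dmul Lb Xb + dmul Xb Lb))
          + (t ^ 2) • dcomm L (dneg X - dneg Xb) := by
      rw [dcomm_shift t
            (mulFin_upper hL (isUpper_add (isUpper_sub uN u1) u2))
            (mulFin_upper (isUpper_add (isUpper_sub uN u1) u2) hL),
          dcomm_add_right (mulFin_upper hL (isUpper_sub uN u1)) (mulFin_upper hL u2)
            (mulFin_upper (isUpper_sub uN u1) hL) (mulFin_upper u2 hL),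
          dcomm_sub_right (mulFin_upper hL uN) (mulFin_upper hL u1)
            (mulFin_upper uN hL) (mulFin_upper u1 hL),
          dcomm_smul_right, dcomm_smul_right]
    have e7b : dcomm (Lb - t • done)
          (dpos (dmul (dmul Lb Xb) Lb - dmul (dmul L X) L)
            - t • (dpos (dmul Lb Xb + dmul Xb Lb) - dpos (dmul L X + dmul X L))
            + (t ^ 2) • (dpos Xb - dpos X))
        = dcomm Lb (dpos (dmul (dmul Lb Xb) Lb - dmul (dmul L X) L))
          - t • dcomm Lb (dpos (dmul Lb Xb + dmul Xb Lb) - dpos (dmul L X + dmul X L))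
          + (t ^ 2) • dcomm Lb (dpos Xb - dpos X) := by
      rw [dcomm_shift t
            (mulFin_lower hLb (isLower_add (isLower_sub lN l1) l2))
            (mulFin_lower (isLower_add (isLower_sub lN l1) l2) hLb),
          dcomm_add_right (mulFin_lower hLb (isLower_sub lN l1)) (mulFin_lower hLb l2)
            (mulFin_lower (isLower_sub lN l1) hLb) (mulFin_lower l2 hLb),
          dcomm_sub_right (mulFin_lower hLb lN) (mulFin_lower hLb l1)
            (mulFin_lower lN hLb) (mulFin_lower l1 hLb),
          dcomm_smul_right, dcomm_smul_right]
    rw [P3T_mk, P3T_mk, P2T_mk, P1T_mk]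
    simp only [Prod.mk_sub_mk, Prod.mk_add_mk, Prod.smul_mk, Prod.mk.injEq]
    constructor
    · rw [h1, h2, hLX, hLbXb, g1, g2, e6, e7, hLT, g3]
      module
    · rw [h1, h2, hLX, hLbXb, g1, g2, e6b, e7b, hLbT, g3b]
      module
end
end
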